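/- Let K be a convex body in ℝⁿ and let E(θ) = c + (cos θ)·u + (sin θ)·v be an ellipse inscribed in K (u, v linearly independent). Then E is a-maximal for K if and only if no translate of E lies entirely in the interior of K, i.e., if and only if for every w ∈ ℝⁿ there exists θ ∈ ℝ with E(θ) + w ∉ int K. -/

import Mathlib

/-- A convex body in ℝⁿ: a compact convex set with nonempty interior. -/
def IsConvexBody {n : ℕ} (K : Set (EuclideanSpace ℝ (Fin n))) : Prop :=
  IsCompact K ∧ Convex ℝ K ∧ (interior K).Nonempty

/-- The parametrized ellipse `θ ↦ c + (cos θ)•u + (sin θ)•v` is inscribed in `K`. -/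
def EllipseInscribed {n : ℕ} (K : Set (EuclideanSpace ℝ (Fin n)))
    (c u v : EuclideanSpace ℝ (Fin n)) : Prop :=
  ∀ θ : ℝ, c + (Real.cos θ) • u + (Real.sin θ) • v ∈ K

/-- The inscribed ellipse `θ ↦ c + (cos θ)•u + (sin θ)•v` is `a`-maximal for `K`:
no dilated copy (ratio `ρ > 1`, same orientation and eccentricity) is inscribed in `K`. -/
def AMaximal {n : ℕ} (K : Set (EuclideanSpace ℝ (Fin n)))
    (c u v : EuclideanSpace ℝ (Fin n)) : Prop :=
  ¬ ∃ (ρ : ℝ) (c' : EuclideanSpace ℝ (Fin n)), 1 < ρ ∧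
      ∀ θ : ℝ, c' + ρ • ((Real.cos θ) • u + (Real.sin θ) • v) ∈ K


/-!
An ellipse is a translate of the compact curve `e θ = cos θ • u + sin θ • v`. If some translate
`p + e` lies in the open set `int K`, then so does `p + ρ • e` for `ρ` slightly above `1`, by the
tube lemma. Conversely, if `c' + ρ • e ⊆ K` with `ρ > 1` and `z ∈ int K`, then the convex
combination `(1 - ρ⁻¹) • z + ρ⁻¹ • (c' + ρ • e)`, a translate of `e`, lies in `int K`.
-/

open Set Filter Topology

section TopologicalVectorSpace

variable {ι E : Type*} [AddCommGroup E] [TopologicalSpace E] [IsTopologicalAddGroup E]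
  [Module ℝ E] [ContinuousSMul ℝ E]

theorem IsCompact.exists_one_lt_forall_add_smul_mem {f : ι → E} {U : Set E} {p : E}
    (hf : IsCompact (range f)) (hU : IsOpen U) (h : ∀ i, p + f i ∈ U) :
    ∃ ρ : ℝ, 1 < ρ ∧ ∀ i, p + ρ • f i ∈ U := by
  have hnear : ∀ᶠ ρ in 𝓝 (1 : ℝ), ∀ x ∈ range f, p + ρ • x ∈ U := by
    refine hf.eventually_forall_of_forall_eventually ?_
    rintro _ ⟨i, rfl⟩
    have hcont : Continuous fun q : ℝ × E => p + q.1 • q.2 := by fun_prop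
    exact hcont.continuousAt.preimage_mem_nhds (hU.mem_nhds (by simpa using h i))
  obtain ⟨ρ, hρ, hρ1⟩ := (hnear.filter_mono nhdsWithin_le_nhds).and self_mem_nhdsWithin
    |>.exists (f := 𝓝[>] (1 : ℝ))
  exact ⟨ρ, hρ1, fun i => hρ _ (mem_range_self i)⟩

theorem Convex.exists_forall_add_mem_interior {K : Set E} {f : ι → E} {z c : E} {ρ : ℝ}
    (hK : Convex ℝ K) (hz : z ∈ interior K) (hρ : 1 < ρ) (h : ∀ i, c + ρ • f i ∈ K) :
    ∃ p, ∀ i, p + f i ∈ interior K := by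
  have hρ0 : ρ ≠ 0 := by positivity
  refine ⟨(1 - ρ⁻¹) • z + ρ⁻¹ • c, fun i => ?_⟩
  have hcombo := hK.combo_interior_self_mem_interior hz (h i)
    (sub_pos.2 (inv_lt_one_of_one_lt₀ hρ)) (by positivity) (sub_add_cancel 1 ρ⁻¹)
  rwa [smul_add, smul_smul, inv_mul_cancel₀ hρ0, one_smul, ← add_assoc] at hcombo

theorem isCompact_range_cos_smul_add_sin_smul (u v : E) :
    IsCompact (range fun θ : ℝ => Real.cos θ • u + Real.sin θ • v) :=
  Function.Periodic.compact_of_continuous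
    (fun θ => by simp only [Real.cos_add_two_pi, Real.sin_add_two_pi])
    Real.two_pi_pos.ne' (by fun_prop)

end TopologicalVectorSpace

theorem stmt_1 {n : ℕ} (K : Set (EuclideanSpace ℝ (Fin n)))
    (hK : IsConvexBody K) (c u v : EuclideanSpace ℝ (Fin n)) :
    AMaximal K c u v ↔
      ∀ w : EuclideanSpace ℝ (Fin n), ∃ θ : ℝ,
        c + (Real.cos θ) • u + (Real.sin θ) • v + w ∉ interior K := by
  constructor
  · intro hmax w
    by_contra! hw
    obtain ⟨ρ, hρ, h⟩ :=
      (isCompact_range_cos_smul_add_sin_smul u v).exists_one_lt_forall_add_smul_mem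
        isOpen_interior (p := c + w) fun θ => by convert hw θ using 1; abel
    exact hmax ⟨ρ, c + w, hρ, fun θ => interior_subset (h θ)⟩
  · rintro hout ⟨ρ, c', hρ, h⟩
    obtain ⟨p, hp⟩ := hK.2.1.exists_forall_add_mem_interior hK.2.2.some_mem hρ h
    obtain ⟨θ, hθ⟩ := hout (p - c)
    exact hθ (by convert hp θ using 1; abel)
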